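/- arXiv:2007.06093 — 4 statements merged into one kernel-verified Lean document; each statement's English description precedes it below -/
import Mathlib

section
/- Let t be normalized squashable with dilation parameters μ, ε, θ as above (t(μx) > 1-θ for x ≥ ε/2, t(μx) < θ for x ≤ -ε/2), and let a ≤ b be reals. Define H(x) = t(μ(x + 0.5ε - a)) - t(μ(x - 0.5ε - b)). Then: (1) if x ∈ [a,b] then H(x) ∈ (1-2θ, 1]; (2) if x ≤ a - ε or x ≥ b + ε then H(x) ∈ (-θ, θ); (3) for all x, H(x) ≤ 1. -/
open Set

theorem stmt4 (t : ℝ → ℝ) (θ ε μ a b : ℝ)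
    (hmono : Monotone t)
    (hrange : ∀ x, t x ∈ Icc (0 : ℝ) 1)
    (hθ : 0 < θ) (hε : 0 < ε)
    (hhi : ∀ x : ℝ, ε / 2 ≤ x → 1 - θ < t (μ * x))
    (hlo : ∀ x : ℝ, x ≤ -(ε / 2) → t (μ * x) < θ)
    (hab : a ≤ b)
    (H : ℝ → ℝ)
    (hH : H = fun x => t (μ * (x + 0.5 * ε - a)) - t (μ * (x - 0.5 * ε - b))) :
    (∀ x ∈ Icc a b, H x ∈ Ioc (1 - 2 * θ) 1) ∧
    (∀ x : ℝ, (x ≤ a - ε ∨ b + ε ≤ x) → H x ∈ Ioo (-θ) θ) ∧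
    (∀ x : ℝ, H x ≤ 1) := by
  subst hH
  have h1 : ∀ x : ℝ, t x ≤ 1 := fun x => (hrange x).2
  have h0 : ∀ x : ℝ, 0 ≤ t x := fun x => (hrange x).1
  refine ⟨?_, ?_, ?_⟩
  · rintro x ⟨hxa, hxb⟩
    constructor
    · have A := hhi (x + 0.5 * ε - a) (by linarith)
      have B := hlo (x - 0.5 * ε - b) (by linarith)
      simp only
      linarith
    · simp only
      linarith [h1 (μ * (x + 0.5 * ε - a)), h0 (μ * (x - 0.5 * ε - b))]
  · rintro x (hx | hx)
    · have A := hlo (x + 0.5 * ε - a) (by linarith)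
      have B := hlo (x - 0.5 * ε - b) (by linarith)
      constructor <;> simp only <;>
        linarith [h0 (μ * (x + 0.5 * ε - a)), h0 (μ * (x - 0.5 * ε - b))]
    · have A := hhi (x + 0.5 * ε - a) (by linarith)
      have B := hhi (x - 0.5 * ε - b) (by linarith)
      constructor <;> simp only <;>
        linarith [h1 (μ * (x + 0.5 * ε - a)), h1 (μ * (x - 0.5 * ε - b))]
  · intro x
    simp only
    linarith [h1 (μ * (x + 0.5 * ε - a)), h0 (μ * (x - 0.5 * ε - b))]
end

section
/- Let φ be a 3CNF formula with k clauses over m Boolean variables and N_φ its neural-network encoding built from activations t₁, t₂, t₃ satisfying the stated bounds. If φ is satisfiable, then there exists z ∈ [0,1]^m with N_φ(z) > 1/2 + δ; hence max N_φ([0,1]^m) > 1/2 + δ. -/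
open Set

/-- Real evaluation of a literal `(i, pos)` on input `z`. -/
noncomputable def litEval {m : ℕ} (z : Fin m → ℝ) (L : Fin m × Bool) : ℝ :=
  if L.2 then z L.1 else 1 - z L.1

/-- Boolean truth of a literal under assignment `v`. -/
def litTrue {m : ℕ} (v : Fin m → Bool) (L : Fin m × Bool) : Prop :=
  if L.2 then v L.1 = true else v L.1 = false

theorem stmt12 (m k : ℕ) (hk : 1 ≤ k) (δ : ℝ) (hδ0 : 0 < δ) (hδ1 : δ < 1 / 2)
    (φ : Fin k → Fin 3 → Fin m × Bool)
    (t₁ t₂ t₃ : ℝ → ℝ)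
    (ht₁lo : ∀ z : ℝ, z ≤ 0.6 → t₁ z ∈ Icc (-0.2 : ℝ) (-0.1))
    (ht₁hi : ∀ z : ℝ, 0.7 ≤ z → t₁ z ∈ Icc (0.5 : ℝ) 0.6)
    (ht₂hi : ∀ z : ℝ, 0.1 ≤ z → t₂ z ∈ Icc (1 / (2 * (k : ℝ))) (1 / (k : ℝ)))
    (ht₂lo : ∀ z : ℝ, z ≤ 0 → t₂ z ≤ -1)
    (ht₃hi : ∀ z : ℝ, 0.5 ≤ z → t₃ z ∈ Ioc (1 / 2 + δ) 1)
    (ht₃lo : ∀ z : ℝ, z ≤ 0 → t₃ z ∈ Ico (0 : ℝ) (1 / 2 - δ))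
    (N : (Fin m → ℝ) → ℝ)
    (hN : N = fun z => t₃ (∑ j : Fin k, t₂ (∑ i : Fin 3, t₁ (litEval z (φ j i)))))
    (hsat : ∃ v : Fin m → Bool, ∀ j : Fin k, ∃ i : Fin 3, litTrue v (φ j i)) :
    ∃ z : Fin m → ℝ, (∀ i, z i ∈ Icc (0 : ℝ) 1) ∧ 1 / 2 + δ < N z := by
  obtain ⟨v, hv⟩ := hsat
  set z : Fin m → ℝ := fun i => if v i then 1 else 0 with hz
  have hk0 : (0 : ℝ) < k := by exact_mod_cast hk
  -- litEval values are 0 or 1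
  have hval : ∀ L : Fin m × Bool, litEval z L = 0 ∨ litEval z L = 1 := by
    intro L
    unfold litEval
    rcases Bool.eq_false_or_eq_true L.2 with h | h <;> rcases Bool.eq_false_or_eq_true (v L.1) with h2 | h2 <;>
      simp [hz, h, h2]
  have htrue : ∀ L : Fin m × Bool, litTrue v L → litEval z L = 1 := by
    intro L hL
    unfold litTrue at hL
    unfold litEval
    rcases Bool.eq_false_or_eq_true L.2 with h | h <;> simp [h] at hL ⊢ <;> simp [hz, hL]
  -- t₁ lower bound always
  have ht1lb : ∀ L : Fin m × Bool, (-0.2 : ℝ) ≤ t₁ (litEval z L) := by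
    intro L
    rcases hval L with h | h
    · have := ht₁lo (litEval z L) (by rw [h]; norm_num)
      exact this.1
    · have := ht₁hi (litEval z L) (by rw [h]; norm_num)
      linarith [this.1]
  -- per-clause inner sum ≥ 0.1
  have hclause : ∀ j : Fin k, (0.1 : ℝ) ≤ ∑ i : Fin 3, t₁ (litEval z (φ j i)) := by
    intro j
    obtain ⟨i, hi⟩ := hv j
    have h1 : (0.5 : ℝ) ≤ t₁ (litEval z (φ j i)) := by
      have := ht₁hi (litEval z (φ j i)) (by rw [htrue _ hi]; norm_num)
      exact this.1
    have hle : ∀ i' : Fin 3, i' ≠ i → (-0.2 : ℝ) ≤ t₁ (litEval z (φ j i')) :=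
      fun i' _ => ht1lb _
    rw [Fin.sum_univ_three]
    fin_cases i <;> simp at h1 <;>
      linarith [ht1lb (φ j 0), ht1lb (φ j 1), ht1lb (φ j 2)]
  have ht2 : ∀ j : Fin k, (1 / (2 * (k : ℝ))) ≤ t₂ (∑ i : Fin 3, t₁ (litEval z (φ j i))) :=
    fun j => (ht₂hi _ (hclause j)).1
  have hsum : (0.5 : ℝ) ≤ ∑ j : Fin k, t₂ (∑ i : Fin 3, t₁ (litEval z (φ j i))) := by
    calc (0.5 : ℝ) = (k : ℝ) * (1 / (2 * (k : ℝ))) := by field_simp; ring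
    _ ≤ ∑ j : Fin k, t₂ (∑ i : Fin 3, t₁ (litEval z (φ j i))) := by
        simpa [nsmul_eq_mul] using
          Finset.card_nsmul_le_sum (Finset.univ : Finset (Fin k)) _ _ (fun j _ => ht2 j)
  refine ⟨z, fun i => ?_, ?_⟩
  · rcases Bool.eq_false_or_eq_true (v i) with h | h <;> simp [hz, h] <;> norm_num
  · rw [hN]
    exact (ht₃hi _ hsum).1
end

section
/- Let φ be a 3DNF formula with k clauses encoded as N_φ using activations t₃, t₄, t₅ with the stated bounds. If φ is not a tautology, then there exists z ∈ [0,1]^m (a Boolean unsatisfying assignment) with N_φ(z) < 1/2 - δ; hence min N_φ([0,1]^m) < 1/2 - δ. -/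
open Set

theorem stmt14 (m k : ℕ) (hk : 1 ≤ k) (δ : ℝ) (hδ0 : 0 < δ) (hδ1 : δ < 1 / 2)
    (φ : Fin k → Fin 3 → Fin m × Bool)
    (t₃ t₄ t₅ : ℝ → ℝ)
    (ht₄lo : ∀ z : ℝ, z ≤ 0.3 → t₄ z ∈ Icc (-0.6 : ℝ) (-0.5))
    (ht₄hi : ∀ z : ℝ, 0.4 ≤ z → t₄ z ∈ Icc (0.1 : ℝ) 0.2)
    (ht₅lo : ∀ z : ℝ, z ≤ 0 → t₅ z ∈ Icc (-(1 / (2 * (k : ℝ)))) (-(1 / (4 * (k : ℝ)))))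
    (ht₅hi : ∀ z : ℝ, 0.1 ≤ z → 1 ≤ t₅ z)
    (ht₃hi : ∀ z : ℝ, 0.5 ≤ z → t₃ z ∈ Ioc (1 / 2 + δ) 1)
    (ht₃lo : ∀ z : ℝ, z ≤ 0 → t₃ z ∈ Ico (0 : ℝ) (1 / 2 - δ))
    (N : (Fin m → ℝ) → ℝ)
    (hN : N = fun z => t₃ (∑ j : Fin k, t₅ (∑ i : Fin 3, t₄ (litEval z (φ j i)))))
    (hnontaut : ∃ v : Fin m → Bool, ∀ j : Fin k, ∃ i : Fin 3, ¬ litTrue v (φ j i)) :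
    ∃ z : Fin m → ℝ, (∀ i, z i ∈ Icc (0 : ℝ) 1) ∧ N z < 1 / 2 - δ := by
  obtain ⟨v, hv⟩ := hnontaut
  set z : Fin m → ℝ := fun i => if v i then 1 else 0 with hz
  refine ⟨z, ?_, ?_⟩
  · intro i
    by_cases h : v i <;> simp [hz, h]
  -- each literal evaluates to 0 or 1
  have hval : ∀ L : Fin m × Bool, litEval z L = 0 ∨ litEval z L = 1 := by
    intro L
    unfold litEval
    by_cases h1 : L.2 <;> by_cases h2 : v L.1 <;> simp only [hz, h1, h2] <;> simp
  have hfalse : ∀ L : Fin m × Bool, ¬ litTrue v L → litEval z L = 0 := by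
    intro L hL
    unfold litTrue at hL
    unfold litEval
    by_cases h1 : L.2 <;> by_cases h2 : v L.1 <;> simp only [hz, h1, h2] <;> simp_all
  have ht₄le : ∀ L : Fin m × Bool, t₄ (litEval z L) ≤ 0.2 := by
    intro L
    rcases hval L with h | h <;> rw [h]
    · have := (ht₄lo 0 (by norm_num)).2
      linarith
    · exact (ht₄hi 1 (by norm_num)).2
  have hkpos : (0:ℝ) < k := by exact_mod_cast hk
  -- inner sum of each clause ≤ 0
  have hinner : ∀ j : Fin k, (∑ i : Fin 3, t₄ (litEval z (φ j i))) ≤ 0 := by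
    intro j
    obtain ⟨i, hi⟩ := hv j
    have h0 : litEval z (φ j i) = 0 := hfalse _ hi
    have hneg : t₄ (litEval z (φ j i)) ≤ -0.5 := by
      rw [h0]; exact (ht₄lo 0 (by norm_num)).2
    have hsum : (∑ i' : Fin 3, t₄ (litEval z (φ j i')))
        = t₄ (litEval z (φ j i)) + ∑ i' ∈ Finset.univ.erase i, t₄ (litEval z (φ j i')) := by
      exact (Finset.add_sum_erase _ _ (Finset.mem_univ i)).symm
    rw [hsum]
    have hcard : (Finset.univ.erase i).card = 2 := by
      rw [Finset.card_erase_of_mem (Finset.mem_univ i)]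
      simp
    have hrest : (∑ i' ∈ Finset.univ.erase i, t₄ (litEval z (φ j i'))) ≤ 2 * 0.2 := by
      calc (∑ i' ∈ Finset.univ.erase i, t₄ (litEval z (φ j i')))
          ≤ ∑ i' ∈ Finset.univ.erase i, (0.2:ℝ) :=
            Finset.sum_le_sum (fun i' _ => ht₄le _)
        _ = 2 * 0.2 := by rw [Finset.sum_const, hcard]; norm_num
    linarith
  have ht₅le : ∀ j : Fin k, t₅ (∑ i : Fin 3, t₄ (litEval z (φ j i))) ≤ -(1 / (4 * (k:ℝ))) :=
    fun j => (ht₅lo _ (hinner j)).2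
  have houter : (∑ j : Fin k, t₅ (∑ i : Fin 3, t₄ (litEval z (φ j i)))) ≤ 0 := by
    calc (∑ j : Fin k, t₅ (∑ i : Fin 3, t₄ (litEval z (φ j i))))
        ≤ ∑ j : Fin k, (-(1 / (4 * (k:ℝ)))) := Finset.sum_le_sum (fun j _ => ht₅le j)
      _ = k * (-(1 / (4 * (k:ℝ)))) := by rw [Finset.sum_const]; simp [mul_comm]
      _ ≤ 0 := by
          rw [mul_neg]
          have : 0 ≤ (k:ℝ) * (1 / (4 * (k:ℝ))) := by positivity
          linarith
  rw [hN]
  exact (ht₃lo _ houter).2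
end

section
/- In the same setting (f ε-robust on M, never equal to 0.5 on ε-balls of M, δ' the minimal distance to 0.5, and N δ-interval approximating f with δ < δ'): for every x ∈ M with f(x) < 0.5, the abstract output N#(R_ε(x)) is contained in (-∞, 0.5), and for every x ∈ M with f(x) > 0.5, N#(R_ε(x)) ⊆ [0.5, ∞). Hence N is ε-provably robust on M under interval abstract interpretation. -/
open Set

theorem stmt17 (m : ℕ) (C M : Set (Fin m → ℝ)) (hMC : M ⊆ C)
    (f N : (Fin m → ℝ) → ℝ) (ε : ℝ) (hε : 0 < ε)
    (hball : ∀ x ∈ M, ∀ z : Fin m → ℝ, ‖z - x‖ ≤ ε → z ∈ C)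
    (hrobust : ∀ x ∈ M, ∀ z : Fin m → ℝ, ‖z - x‖ ≤ ε → (f x < 0.5 ↔ f z < 0.5))
    (hne : ∀ x ∈ M, ∀ z : Fin m → ℝ, ‖z - x‖ ≤ ε → f z ≠ 0.5)
    (δ' : ℝ) (hδ'pos : 0 < δ')
    (hδ' : ∀ x ∈ M, ∀ z : Fin m → ℝ, ‖z - x‖ ≤ ε → δ' ≤ |f z - 0.5|)
    (Nabs : Set (Fin m → ℝ) → Set ℝ) (δ : ℝ) (hδ0 : 0 < δ) (hδ : δ < δ')
    (happrox : ∀ lo hi : Fin m → ℝ, Icc lo hi ⊆ C →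
      Icc (sInf (f '' Icc lo hi) + δ) (sSup (f '' Icc lo hi) - δ) ⊆ Nabs (Icc lo hi) ∧
      Nabs (Icc lo hi) ⊆ Icc (sInf (f '' Icc lo hi) - δ) (sSup (f '' Icc lo hi) + δ))
    (hpoint : ∀ x ∈ C, N x ∈ Nabs (Icc x x)) :
    ∀ x ∈ M,
      (f x < 0.5 →
        Nabs (Icc (fun i => x i - ε) (fun i => x i + ε)) ⊆ Iio (0.5 : ℝ)) ∧
      (0.5 < f x →
        Nabs (Icc (fun i => x i - ε) (fun i => x i + ε)) ⊆ Ici (0.5 : ℝ)) := by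
  intro x hx
  set lo : Fin m → ℝ := fun i => x i - ε
  set hi : Fin m → ℝ := fun i => x i + ε
  have hnorm : ∀ z ∈ Icc lo hi, ‖z - x‖ ≤ ε := by
    intro z hz
    rw [pi_norm_le_iff_of_nonneg hε.le]
    intro i
    have h1 := hz.1 i
    have h2 := hz.2 i
    simp only [lo, hi] at h1 h2
    rw [Real.norm_eq_abs, abs_le]
    constructor <;> simp only [Pi.sub_apply] <;> linarith
  have hsub : Icc lo hi ⊆ C := fun z hz => hball x hx z (hnorm z hz)
  have hxmem : x ∈ Icc lo hi := by
    constructor <;> intro i <;> simp [lo, hi] <;> linarith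
  have hnonempty : (f '' Icc lo hi).Nonempty := ⟨f x, x, hxmem, rfl⟩
  have hcont := (happrox lo hi hsub).2
  constructor
  · intro hfx y hy
    have hSup : sSup (f '' Icc lo hi) ≤ 0.5 - δ' := by
      apply csSup_le hnonempty
      rintro v ⟨z, hz, rfl⟩
      have hn := hnorm z hz
      have h1 : f z < 0.5 := (hrobust x hx z hn).1 hfx
      have h2 := hδ' x hx z hn
      rw [abs_sub_comm, abs_of_pos (by linarith)] at h2
      linarith
    have := (hcont hy).2
    simp only [mem_Iio]
    linarith
  · intro hfx y hy
    have hInf : 0.5 + δ' ≤ sInf (f '' Icc lo hi) := by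
      apply le_csInf hnonempty
      rintro v ⟨z, hz, rfl⟩
      have hn := hnorm z hz
      have h1 : ¬ f z < 0.5 := fun h => absurd ((hrobust x hx z hn).2 h) (by linarith)
      have h2 := hδ' x hx z hn
      have h3 := hne x hx z hn
      rw [abs_of_pos (by push_neg at h1; rcases lt_or_eq_of_le h1 with h|h; linarith; exact absurd h.symm h3)] at h2
      linarith
    have := (hcont hy).1
    simp only [mem_Ici]
    linarith
end
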